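/- arXiv:1805.11540 — 2 statements merged into one kernel-verified Lean document; each statement's English description precedes it below -/
import Mathlib

section
/- Let G : (0,1) → ℝ be nonnegative and integrable, x ∈ (0,1), α, β > -1. Define V(A) = ∫₀¹ G(t) x^α t^{-1} (log(1/x) + A·log(1/t))^{-(β+1)} dt for A > 0 (assuming convergence for all A > 0). Then V is log-convex on (0,∞), and consequently V(A)·V(A+2) ≥ V(A+1)² for all A > 0. -/
open MeasureTheory Real Set

/-!
Since `u ↦ u ^ (-r)` is log-convex on `(0, ∞)` for `r ≥ 0` (weighted AM-GM plus antitonicity),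
the integrand is pointwise log-convex in the affine parameter `A`; Hölder's inequality with
exponents `1/l`, `1/(1-l)` carries this over to the integral. The Turán inequality is the
midpoint case `A, A + 2`, `l = 1/2`.
-/

theorem rpow_neg_weighted_mean_le {u v l r : ℝ} (hu : 0 < u) (hv : 0 < v) (hl0 : 0 ≤ l)
    (hl1 : l ≤ 1) (hr : 0 ≤ r) :
    (l * u + (1 - l) * v) ^ (-r) ≤ (u ^ (-r)) ^ l * (v ^ (-r)) ^ (1 - l) := by
  have hgm : 0 < u ^ l * v ^ (1 - l) := by positivity
  calc (l * u + (1 - l) * v) ^ (-r) ≤ (u ^ l * v ^ (1 - l)) ^ (-r) :=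
        rpow_le_rpow_of_nonpos hgm
          (geom_mean_le_arith_mean2_weighted hl0 (by linarith) hu.le hv.le (by ring))
          (by linarith)
    _ = (u ^ (-r)) ^ l * (v ^ (-r)) ^ (1 - l) := by
        rw [mul_rpow (by positivity) (by positivity), ← rpow_mul hu.le, ← rpow_mul hv.le,
          ← rpow_mul hu.le, ← rpow_mul hv.le, mul_comm l, mul_comm (1 - l)]

theorem mul_rpow_mul_mul_rpow_one_sub {w a b : ℝ} (hw : 0 ≤ w) (ha : 0 ≤ a) (hb : 0 ≤ b)
    (l : ℝ) :
    (w * a) ^ l * (w * b) ^ (1 - l) = w * (a ^ l * b ^ (1 - l)) := by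
  rw [mul_rpow hw ha, mul_rpow hw hb, mul_mul_mul_comm, ← rpow_add' hw (by norm_num),
    add_sub_cancel, rpow_one]

section

variable {α : Type*} [MeasurableSpace α] {μ : Measure α}

theorem ofReal_integral_le_lintegral_ofReal {h : α → ℝ} (hh : 0 ≤ᵐ[μ] h) :
    ENNReal.ofReal (∫ a, h a ∂μ) ≤ ∫⁻ a, ENNReal.ofReal (h a) ∂μ :=
  calc ENNReal.ofReal (∫ a, h a ∂μ) ≤ ‖∫ a, h a ∂μ‖ₑ := Real.ofReal_le_enorm _
    _ ≤ ∫⁻ a, ‖h a‖ₑ ∂μ := enorm_integral_le_lintegral_enorm h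
    _ = ∫⁻ a, ENNReal.ofReal (h a) ∂μ :=
      lintegral_congr_ae (hh.mono fun _ ha => Real.enorm_eq_ofReal ha)

theorem integral_le_integral_rpow_mul_integral_rpow {f g h : α → ℝ} {p q : ℝ}
    (hp : 0 ≤ p) (hq : 0 ≤ q) (hpq : p + q = 1) (hf : Integrable f μ) (hg : Integrable g μ)
    (hf0 : 0 ≤ᵐ[μ] f) (hg0 : 0 ≤ᵐ[μ] g) (hh0 : 0 ≤ᵐ[μ] h)
    (hle : ∀ᵐ a ∂μ, h a ≤ f a ^ p * g a ^ q) :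
    ∫ a, h a ∂μ ≤ (∫ a, f a ∂μ) ^ p * (∫ a, g a ∂μ) ^ q := by
  have hIf : 0 ≤ ∫ a, f a ∂μ := integral_nonneg_of_ae hf0
  have hIg : 0 ≤ ∫ a, g a ∂μ := integral_nonneg_of_ae hg0
  rw [← ENNReal.ofReal_le_ofReal_iff (by positivity), ENNReal.ofReal_mul (by positivity),
    ← ENNReal.ofReal_rpow_of_nonneg hIf hp, ← ENNReal.ofReal_rpow_of_nonneg hIg hq,
    ofReal_integral_eq_lintegral_ofReal hf hf0, ofReal_integral_eq_lintegral_ofReal hg hg0]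
  refine (ofReal_integral_le_lintegral_ofReal hh0).trans
    (le_trans (lintegral_mono_ae ?_) (ENNReal.lintegral_mul_norm_pow_le
      hf.aemeasurable.ennreal_ofReal hg.aemeasurable.ennreal_ofReal hp hq hpq))
  filter_upwards [hf0, hg0, hle] with a hfa hga hla
  rw [ENNReal.ofReal_rpow_of_nonneg hfa hp, ENNReal.ofReal_rpow_of_nonneg hga hq,
    ← ENNReal.ofReal_mul (rpow_nonneg hfa p)]
  exact ENNReal.ofReal_le_ofReal hla

theorem integral_mul_rpow_neg_affine_le {w a b : α → ℝ} {A₁ A₂ l r : ℝ}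
    (hl0 : 0 ≤ l) (hl1 : l ≤ 1) (hr : 0 ≤ r) (hw : 0 ≤ᵐ[μ] w)
    (hpos₁ : ∀ᵐ t ∂μ, 0 < a t + A₁ * b t) (hpos₂ : ∀ᵐ t ∂μ, 0 < a t + A₂ * b t)
    (hint₁ : Integrable (fun t => w t * (a t + A₁ * b t) ^ (-r)) μ)
    (hint₂ : Integrable (fun t => w t * (a t + A₂ * b t) ^ (-r)) μ) :
    ∫ t, w t * (a t + (l * A₁ + (1 - l) * A₂) * b t) ^ (-r) ∂μ ≤
      (∫ t, w t * (a t + A₁ * b t) ^ (-r) ∂μ) ^ l *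
        (∫ t, w t * (a t + A₂ * b t) ^ (-r) ∂μ) ^ (1 - l) := by
  have hmix : ∀ t, a t + (l * A₁ + (1 - l) * A₂) * b t =
      l * (a t + A₁ * b t) + (1 - l) * (a t + A₂ * b t) := fun t => by ring
  simp_rw [hmix]
  refine integral_le_integral_rpow_mul_integral_rpow hl0 (sub_nonneg.2 hl1) (by ring)
    hint₁ hint₂ ?_ ?_ ?_ ?_ <;>
  filter_upwards [hw, hpos₁, hpos₂] with t hwt h₁ h₂
  · exact mul_nonneg hwt (rpow_nonneg h₁.le _)
  · exact mul_nonneg hwt (rpow_nonneg h₂.le _)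
  · have : 0 < l * (a t + A₁ * b t) + (1 - l) * (a t + A₂ * b t) :=
      convex_Ioi (0 : ℝ) h₁ h₂ hl0 (sub_nonneg.2 hl1) (add_sub_cancel l 1)
    exact mul_nonneg hwt (rpow_nonneg this.le _)
  · rw [mul_rpow_mul_mul_rpow_one_sub hwt (rpow_nonneg h₁.le _) (rpow_nonneg h₂.le _)]
    exact mul_le_mul_of_nonneg_left (rpow_neg_weighted_mean_le h₁ h₂ hl0 hl1 hr) hwt

end

theorem sq_le_mul_of_le_rpow_half_mul_rpow_half {m u v : ℝ} (hm : 0 ≤ m) (hu : 0 ≤ u)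
    (hv : 0 ≤ v) (h : m ≤ u ^ (1 / 2 : ℝ) * v ^ (1 / 2 : ℝ)) : m ^ 2 ≤ u * v := by
  rwa [← mul_rpow hu hv, ← sqrt_eq_rpow, le_sqrt hm (mul_nonneg hu hv)] at h

theorem stmt_8_general (x α β : ℝ) (G : ℝ → ℝ)
    (hG : ∀ t ∈ Ioo (0 : ℝ) 1, 0 ≤ G t)
    (hx : x ∈ Ioo (0 : ℝ) 1) (hβ : -1 < β)
    (hconv : ∀ A > (0 : ℝ), IntegrableOn
      (fun t => G t * x ^ α * t⁻¹ *
        (Real.log (1 / x) + A * Real.log (1 / t)) ^ (-(β + 1))) (Ioo 0 1)) :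
    (∀ A₁ ∈ Ioi (0 : ℝ), ∀ A₂ ∈ Ioi (0 : ℝ), ∀ l : ℝ, 0 ≤ l → l ≤ 1 →
      (∫ t in Ioo (0 : ℝ) 1, G t * x ^ α * t⁻¹ *
          (Real.log (1 / x) + (l * A₁ + (1 - l) * A₂) * Real.log (1 / t)) ^ (-(β + 1))) ≤
        (∫ t in Ioo (0 : ℝ) 1, G t * x ^ α * t⁻¹ *
            (Real.log (1 / x) + A₁ * Real.log (1 / t)) ^ (-(β + 1))) ^ l *
          (∫ t in Ioo (0 : ℝ) 1, G t * x ^ α * t⁻¹ *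
              (Real.log (1 / x) + A₂ * Real.log (1 / t)) ^ (-(β + 1))) ^ (1 - l)) ∧
    ∀ A > (0 : ℝ),
      (∫ t in Ioo (0 : ℝ) 1, G t * x ^ α * t⁻¹ *
          (Real.log (1 / x) + (A + 1) * Real.log (1 / t)) ^ (-(β + 1))) ^ 2 ≤
        (∫ t in Ioo (0 : ℝ) 1, G t * x ^ α * t⁻¹ *
            (Real.log (1 / x) + A * Real.log (1 / t)) ^ (-(β + 1))) *
          ∫ t in Ioo (0 : ℝ) 1, G t * x ^ α * t⁻¹ *
            (Real.log (1 / x) + (A + 2) * Real.log (1 / t)) ^ (-(β + 1)) := by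
  have hlog_pos : ∀ y ∈ Ioo (0 : ℝ) 1, 0 < Real.log (1 / y) := fun y hy => by
    rw [one_div, Real.log_inv, neg_pos]
    exact Real.log_neg hy.1 hy.2
  have hpos : ∀ A > (0 : ℝ), ∀ᵐ t ∂volume.restrict (Ioo (0 : ℝ) 1),
      0 < Real.log (1 / x) + A * Real.log (1 / t) := fun A hA =>
    ae_restrict_of_forall_mem measurableSet_Ioo fun t ht =>
      add_pos (hlog_pos x hx) (mul_pos hA (hlog_pos t ht))
  have hw : 0 ≤ᵐ[volume.restrict (Ioo (0 : ℝ) 1)] fun t => G t * x ^ α * t⁻¹ :=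
    ae_restrict_of_forall_mem measurableSet_Ioo fun t ht =>
      mul_nonneg (mul_nonneg (hG t ht) (rpow_nonneg hx.1.le α)) (inv_nonneg.2 ht.1.le)
  have hV_nonneg : ∀ A > (0 : ℝ), 0 ≤ ∫ t in Ioo (0 : ℝ) 1, G t * x ^ α * t⁻¹ *
      (Real.log (1 / x) + A * Real.log (1 / t)) ^ (-(β + 1)) := fun A hA =>
    integral_nonneg_of_ae <| by
      filter_upwards [hw, hpos A hA] with t hwt ht
      exact mul_nonneg hwt (rpow_nonneg ht.le _)
  have hlogconvex : ∀ A₁ ∈ Ioi (0 : ℝ), ∀ A₂ ∈ Ioi (0 : ℝ), ∀ l : ℝ, 0 ≤ l → l ≤ 1 → _ :=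
    fun A₁ hA₁ A₂ hA₂ l hl0 hl1 =>
      integral_mul_rpow_neg_affine_le (b := fun t => Real.log (1 / t)) hl0 hl1
        (by linarith) hw (hpos A₁ hA₁) (hpos A₂ hA₂) (hconv A₁ hA₁) (hconv A₂ hA₂)
  refine ⟨hlogconvex, fun A hA => ?_⟩
  have hmid := hlogconvex A hA (A + 2) (by simp only [mem_Ioi]; linarith) (1 / 2)
    (by norm_num) (by norm_num)
  rw [show (1 / 2 : ℝ) * A + (1 - 1 / 2) * (A + 2) = A + 1 by ring,
    show (1 - 1 / 2 : ℝ) = 1 / 2 by norm_num] at hmid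
  exact sq_le_mul_of_le_rpow_half_mul_rpow_half (hV_nonneg _ (by linarith))
    (hV_nonneg A hA) (hV_nonneg _ (by linarith)) hmid

theorem stmt_8 (x α β : ℝ) (G : ℝ → ℝ)
    (hG : ∀ t ∈ Ioo (0 : ℝ) 1, 0 ≤ G t) (hGint : IntegrableOn G (Ioo 0 1))
    (hx : x ∈ Ioo (0 : ℝ) 1) (hα : -1 < α) (hβ : -1 < β)
    (hconv : ∀ A > (0 : ℝ), IntegrableOn
      (fun t => G t * x ^ α * t⁻¹ *
        (Real.log (1 / x) + A * Real.log (1 / t)) ^ (-(β + 1))) (Ioo 0 1)) :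
    (∀ A₁ ∈ Ioi (0 : ℝ), ∀ A₂ ∈ Ioi (0 : ℝ), ∀ l : ℝ, 0 ≤ l → l ≤ 1 →
      (∫ t in Ioo (0 : ℝ) 1, G t * x ^ α * t⁻¹ *
          (Real.log (1 / x) + (l * A₁ + (1 - l) * A₂) * Real.log (1 / t)) ^ (-(β + 1))) ≤
        (∫ t in Ioo (0 : ℝ) 1, G t * x ^ α * t⁻¹ *
            (Real.log (1 / x) + A₁ * Real.log (1 / t)) ^ (-(β + 1))) ^ l *
          (∫ t in Ioo (0 : ℝ) 1, G t * x ^ α * t⁻¹ *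
              (Real.log (1 / x) + A₂ * Real.log (1 / t)) ^ (-(β + 1))) ^ (1 - l)) ∧
    ∀ A > (0 : ℝ),
      (∫ t in Ioo (0 : ℝ) 1, G t * x ^ α * t⁻¹ *
          (Real.log (1 / x) + (A + 1) * Real.log (1 / t)) ^ (-(β + 1))) ^ 2 ≤
        (∫ t in Ioo (0 : ℝ) 1, G t * x ^ α * t⁻¹ *
            (Real.log (1 / x) + A * Real.log (1 / t)) ^ (-(β + 1))) *
          ∫ t in Ioo (0 : ℝ) 1, G t * x ^ α * t⁻¹ *
            (Real.log (1 / x) + (A + 2) * Real.log (1 / t)) ^ (-(β + 1)) :=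
  stmt_8_general x α β G hG hx hβ hconv
end

section
/- Let μ : (0,∞) → [0,∞) be measurable, λ, μ₀, r > 0, and c : ℕ → ℝ strictly increasing with 0 < c₁, cₙ → ∞, with counting function A(x) = #{n : cₙ ≤ x}. Then, assuming all integrals converge, ∑_{j=1}^∞ (c_j + r)^{-μ₀} ∫₀^∞ e^{-c_j s} s^{λ-1} μ(rs) ds = ∫_{c₁}^∞ A(x) (x+r)^{-μ₀} [ ∫₀^∞ e^{-xs} s^{λ} μ(rs) ds ] dx + μ₀ ∫_{c₁}^∞ A(x)(x+r)^{-(μ₀+1)} [ ∫₀^∞ e^{-xs} s^{λ-1} μ(rs) ds ] dx. -/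
open MeasureTheory Real Set Filter
open scoped ENNReal

lemma ftc_deriv (μ₀ r s : ℝ) {x : ℝ} (hx : 0 < x + r) :
    HasDerivAt (fun x : ℝ => -((x + r) ^ (-μ₀) * Real.exp (-x * s)))
      ((μ₀ * (x + r) ^ (-(μ₀ + 1)) + s * (x + r) ^ (-μ₀)) * Real.exp (-x * s)) x := by
  have h1 : HasDerivAt (fun x : ℝ => (x + r) ^ (-μ₀)) (-μ₀ * (x + r) ^ (-μ₀ - 1) * 1) x :=
    by
      have := (Real.hasDerivAt_rpow_const (x := x + r) (p := -μ₀) (Or.inl hx.ne')).comp x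
        ((hasDerivAt_id x).add_const r)
      exact this
  have h2 : HasDerivAt (fun x : ℝ => Real.exp (-x * s)) (Real.exp (-x * s) * (-s)) x := by
    have hi : HasDerivAt (fun x : ℝ => -x * s) (-s) x := by
      simpa using ((hasDerivAt_id x).neg.mul_const s)
    exact (Real.hasDerivAt_exp (-x * s)).comp x hi
  have : HasDerivAt (fun x : ℝ => -((x + r) ^ (-μ₀) * Real.exp (-x * s))) _ x :=
    (h1.mul h2).neg
  have he : -(μ₀ + 1) = -μ₀ - 1 := by ring
  rw [he]
  convert this using 1
  ring

lemma ftc_int (μ₀ r s w : ℝ) (hμ₀ : 0 < μ₀) (hr : 0 < r) (hs : 0 < s) (hw : 0 < w) :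
    IntegrableOn (fun x => (μ₀ * (x + r) ^ (-(μ₀ + 1)) + s * (x + r) ^ (-μ₀)) * Real.exp (-x * s))
      (Ioi w) ∧
    ∫ x in Ioi w, (μ₀ * (x + r) ^ (-(μ₀ + 1)) + s * (x + r) ^ (-μ₀)) * Real.exp (-x * s)
      = (w + r) ^ (-μ₀) * Real.exp (-w * s) := by
  have hderiv : ∀ x ∈ Ici w, HasDerivAt (fun x : ℝ => -((x + r) ^ (-μ₀) * Real.exp (-x * s)))
      ((μ₀ * (x + r) ^ (-(μ₀ + 1)) + s * (x + r) ^ (-μ₀)) * Real.exp (-x * s)) x := by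
    intro x hx
    exact ftc_deriv μ₀ r s (by simp only [mem_Ici] at hx; linarith)
  have hpos : ∀ x ∈ Ioi w, 0 ≤ (μ₀ * (x + r) ^ (-(μ₀ + 1)) + s * (x + r) ^ (-μ₀)) *
      Real.exp (-x * s) := by
    intro x hx
    simp only [mem_Ioi] at hx
    have hxr : (0:ℝ) ≤ x + r := by linarith
    positivity
  have htd : Tendsto (fun x : ℝ => -((x + r) ^ (-μ₀) * Real.exp (-x * s))) atTop (nhds 0) := by
    have t1 : Tendsto (fun x : ℝ => (x + r) ^ (-μ₀)) atTop (nhds 0) :=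
      (tendsto_rpow_neg_atTop hμ₀).comp (tendsto_atTop_add_const_right _ r tendsto_id)
    have t2 : Tendsto (fun x : ℝ => Real.exp (-x * s)) atTop (nhds 0) := by
      refine Real.tendsto_exp_atBot.comp ?_
      have : Tendsto (fun x : ℝ => x * (-s)) atTop atBot :=
        tendsto_id.atTop_mul_const_of_neg (by linarith)
      simpa [mul_comm, neg_mul, mul_neg] using this
    simpa using (t1.mul t2).neg
  exact ⟨integrableOn_Ioi_deriv_of_nonneg' hderiv hpos htd, by
    rw [integral_Ioi_of_hasDerivAt_of_nonneg' hderiv hpos htd]; ring⟩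

theorem stmt_17 (l μ₀ r : ℝ) (hl : 0 < l) (hμ₀ : 0 < μ₀) (hr : 0 < r)
    (μf : ℝ → ℝ) (hμmeas : Measurable μf) (hμnn : ∀ t ∈ Ioi (0 : ℝ), 0 ≤ μf t)
    (c : ℕ → ℝ) (hmono : StrictMono c) (hc0 : 0 < c 0) (htend : Tendsto c atTop atTop)
    (hV : ∀ w > (0 : ℝ),
      IntegrableOn (fun s => Real.exp (-w * s) * s ^ (l - 1) * μf (r * s)) (Ioi 0))
    (hV' : ∀ w > (0 : ℝ),
      IntegrableOn (fun s => Real.exp (-w * s) * s ^ l * μf (r * s)) (Ioi 0))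
    (hsum : Summable (fun j : ℕ => (c j + r) ^ (-μ₀) *
      ∫ s in Ioi (0 : ℝ), Real.exp (-c j * s) * s ^ (l - 1) * μf (r * s)))
    (hout1 : IntegrableOn (fun x => (Nat.card {n : ℕ | c n ≤ x} : ℝ) * (x + r) ^ (-μ₀) *
      ∫ s in Ioi (0 : ℝ), Real.exp (-x * s) * s ^ l * μf (r * s)) (Ioi (c 0)))
    (hout2 : IntegrableOn (fun x => (Nat.card {n : ℕ | c n ≤ x} : ℝ) *
      (x + r) ^ (-(μ₀ + 1)) *
      ∫ s in Ioi (0 : ℝ), Real.exp (-x * s) * s ^ (l - 1) * μf (r * s)) (Ioi (c 0))) :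
    ∑' j : ℕ, (c j + r) ^ (-μ₀) *
        ∫ s in Ioi (0 : ℝ), Real.exp (-c j * s) * s ^ (l - 1) * μf (r * s) =
      (∫ x in Ioi (c 0), (Nat.card {n : ℕ | c n ≤ x} : ℝ) * (x + r) ^ (-μ₀) *
          ∫ s in Ioi (0 : ℝ), Real.exp (-x * s) * s ^ l * μf (r * s)) +
        μ₀ * ∫ x in Ioi (c 0), (Nat.card {n : ℕ | c n ≤ x} : ℝ) * (x + r) ^ (-(μ₀ + 1)) *
          ∫ s in Ioi (0 : ℝ), Real.exp (-x * s) * s ^ (l - 1) * μf (r * s) := by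
  -- abbreviations
  set Vf : ℝ → ℝ := fun x => ∫ s in Ioi (0:ℝ), Real.exp (-x * s) * s ^ (l - 1) * μf (r * s)
    with hVfdef
  set Wf : ℝ → ℝ := fun x => ∫ s in Ioi (0:ℝ), Real.exp (-x * s) * s ^ l * μf (r * s)
    with hWfdef
  have hinn : ∀ (p x : ℝ), ∀ s ∈ Ioi (0:ℝ), 0 ≤ Real.exp (-x * s) * s ^ p * μf (r * s) := by
    intro p x s hs
    have hs' : (0:ℝ) < s := hs
    have hm : 0 ≤ μf (r * s) := hμnn _ (mul_pos hr hs')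
    have : (0:ℝ) ≤ Real.exp (-x * s) * s ^ p := by positivity
    exact mul_nonneg this hm
  have hVnn : ∀ x, 0 ≤ Vf x := fun x => setIntegral_nonneg measurableSet_Ioi (hinn _ x)
  have hWnn : ∀ x, 0 ≤ Wf x := fun x => setIntegral_nonneg measurableSet_Ioi (hinn _ x)
  have hcpos : ∀ j, 0 < c j := fun j => lt_of_lt_of_le hc0 (hmono.monotone (Nat.zero_le j))
  have hVm : Measurable Vf := by
    have : StronglyMeasurable fun x : ℝ => ∫ s in Ioi (0:ℝ),
        Real.exp (-x * s) * s ^ (l - 1) * μf (r * s) :=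
      MeasureTheory.StronglyMeasurable.integral_prod_right'
        (f := fun p : ℝ × ℝ => Real.exp (-p.1 * p.2) * p.2 ^ (l - 1) * μf (r * p.2))
        (by apply Measurable.stronglyMeasurable; fun_prop)
    exact this.measurable
  have hWm : Measurable Wf := by
    have : StronglyMeasurable fun x : ℝ => ∫ s in Ioi (0:ℝ),
        Real.exp (-x * s) * s ^ l * μf (r * s) :=
      MeasureTheory.StronglyMeasurable.integral_prod_right'
        (f := fun p : ℝ × ℝ => Real.exp (-p.1 * p.2) * p.2 ^ l * μf (r * p.2))
        (by apply Measurable.stronglyMeasurable; fun_prop)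
    exact this.measurable
  set G : ℝ → ℝ≥0∞ := fun x => ENNReal.ofReal ((x + r) ^ (-μ₀) * Wf x) +
      ENNReal.ofReal (μ₀ * ((x + r) ^ (-(μ₀ + 1)) * Vf x)) with hGdef
  have hGm : Measurable G := by
    rw [hGdef]
    exact (Measurable.ennreal_ofReal (by fun_prop)).add (Measurable.ennreal_ofReal (by fun_prop))
  -- Step A: for each w > 0, the integral of G over (w, ∞) is (w+r)^{-μ₀} V(w)
  have stepA : ∀ w : ℝ, 0 < w →
      ∫⁻ x in Ioi w, G x = ENNReal.ofReal ((w + r) ^ (-μ₀) * Vf w) := by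
    intro w hw
    set Φ : ℝ → ℝ → ℝ≥0∞ := fun x s =>
      ENNReal.ofReal ((μ₀ * (x + r) ^ (-(μ₀ + 1)) + s * (x + r) ^ (-μ₀)) * Real.exp (-x * s)) *
        ENNReal.ofReal (s ^ (l - 1) * μf (r * s)) with hΦdef
    have hΦm : Measurable (Function.uncurry Φ) := by
      rw [hΦdef]
      exact (Measurable.ennreal_ofReal (by fun_prop)).mul (Measurable.ennreal_ofReal (by fun_prop))
    have hGpt : ∀ x ∈ Ioi w, G x = ∫⁻ s in Ioi (0:ℝ), Φ x s := by
      intro x hx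
      have hx0 : (0:ℝ) < x := hw.trans hx
      have hxr : (0:ℝ) < x + r := by linarith
      have hpt : ∀ s ∈ Ioi (0:ℝ), Φ x s =
          ENNReal.ofReal (μ₀ * (x + r) ^ (-(μ₀ + 1)) *
            (Real.exp (-x * s) * s ^ (l - 1) * μf (r * s))) +
          ENNReal.ofReal ((x + r) ^ (-μ₀) * (Real.exp (-x * s) * s ^ l * μf (r * s))) := by
        intro s hs
        have hs' : (0:ℝ) < s := hs
        have hm : 0 ≤ μf (r * s) := hμnn _ (mul_pos hr hs')
        have hψ : 0 ≤ (μ₀ * (x + r) ^ (-(μ₀ + 1)) + s * (x + r) ^ (-μ₀)) * Real.exp (-x * s) := by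
          positivity
        rw [hΦdef]
        simp only
        rw [← ENNReal.ofReal_mul hψ, ← ENNReal.ofReal_add
          (by have : (0:ℝ) ≤ Real.exp (-x*s) * s ^ (l-1) * μf (r*s) := hinn _ x s hs; positivity)
          (by have : (0:ℝ) ≤ Real.exp (-x*s) * s ^ l * μf (r*s) := hinn _ x s hs; positivity)]
        congr 1
        have hsl : s ^ l = s ^ (l - 1) * s := by
          rw [show l = l - 1 + 1 by ring, Real.rpow_add_one hs'.ne']
          ring_nf
        rw [hsl]; ring
      rw [setLIntegral_congr_fun_ae measurableSet_Ioi (ae_of_all _ hpt),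
        lintegral_add_left (by apply Measurable.ennreal_ofReal; fun_prop)]
      have h1 : ∫⁻ s in Ioi (0:ℝ), ENNReal.ofReal (μ₀ * (x + r) ^ (-(μ₀ + 1)) *
          (Real.exp (-x * s) * s ^ (l - 1) * μf (r * s))) =
          ENNReal.ofReal (μ₀ * (x + r) ^ (-(μ₀ + 1))) * ENNReal.ofReal (Vf x) := by
        simp_rw [ENNReal.ofReal_mul (by positivity : (0:ℝ) ≤ μ₀ * (x + r) ^ (-(μ₀ + 1)))]
        rw [lintegral_const_mul' _ _ ENNReal.ofReal_ne_top,
          ← ofReal_integral_eq_lintegral_ofReal (hV x hx0)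
            ((ae_restrict_iff' measurableSet_Ioi).mpr (ae_of_all _ (hinn _ x)))]
      have h2 : ∫⁻ s in Ioi (0:ℝ), ENNReal.ofReal ((x + r) ^ (-μ₀) *
          (Real.exp (-x * s) * s ^ l * μf (r * s))) =
          ENNReal.ofReal ((x + r) ^ (-μ₀)) * ENNReal.ofReal (Wf x) := by
        simp_rw [ENNReal.ofReal_mul (by positivity : (0:ℝ) ≤ (x + r) ^ (-μ₀))]
        rw [lintegral_const_mul' _ _ ENNReal.ofReal_ne_top,
          ← ofReal_integral_eq_lintegral_ofReal (hV' x hx0)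
            ((ae_restrict_iff' measurableSet_Ioi).mpr (ae_of_all _ (hinn _ x)))]
      rw [h1, h2, hGdef]
      simp only
      rw [← ENNReal.ofReal_mul (by positivity : (0:ℝ) ≤ (x + r) ^ (-μ₀)),
        ← ENNReal.ofReal_mul (by positivity : (0:ℝ) ≤ μ₀ * (x + r) ^ (-(μ₀ + 1)))]
      rw [add_comm]
      congr 2
      ring
    have hins : ∀ s ∈ Ioi (0:ℝ), ∫⁻ x in Ioi w, Φ x s =
        ENNReal.ofReal ((w + r) ^ (-μ₀)) *
          ENNReal.ofReal (Real.exp (-w * s) * s ^ (l - 1) * μf (r * s)) := by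
      intro s hs
      have hs' : (0:ℝ) < s := hs
      have hm : 0 ≤ μf (r * s) := hμnn _ (mul_pos hr hs')
      rw [hΦdef]
      simp only
      rw [lintegral_mul_const' _ _ ENNReal.ofReal_ne_top,
        ← ofReal_integral_eq_lintegral_ofReal (ftc_int μ₀ r s w hμ₀ hr hs' hw).1
          ((ae_restrict_iff' measurableSet_Ioi).mpr (ae_of_all _ (fun x hx => by
            have hxr : (0:ℝ) ≤ x + r := by have := (mem_Ioi.mp hx); linarith
            positivity))),
        (ftc_int μ₀ r s w hμ₀ hr hs' hw).2,
        ENNReal.ofReal_mul (by positivity : (0:ℝ) ≤ (w + r) ^ (-μ₀)), mul_assoc,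
        ← ENNReal.ofReal_mul (by positivity : (0:ℝ) ≤ Real.exp (-w * s))]
      congr 2
      ring
    calc ∫⁻ x in Ioi w, G x
        = ∫⁻ x in Ioi w, ∫⁻ s in Ioi (0:ℝ), Φ x s :=
          setLIntegral_congr_fun_ae measurableSet_Ioi (ae_of_all _ hGpt)
      _ = ∫⁻ s in Ioi (0:ℝ), ∫⁻ x in Ioi w, Φ x s :=
          lintegral_lintegral_swap hΦm.aemeasurable
      _ = ∫⁻ s in Ioi (0:ℝ), ENNReal.ofReal ((w + r) ^ (-μ₀)) *
            ENNReal.ofReal (Real.exp (-w * s) * s ^ (l - 1) * μf (r * s)) :=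
          setLIntegral_congr_fun_ae measurableSet_Ioi (ae_of_all _ hins)
      _ = ENNReal.ofReal ((w + r) ^ (-μ₀)) *
            ∫⁻ s in Ioi (0:ℝ), ENNReal.ofReal (Real.exp (-w * s) * s ^ (l - 1) * μf (r * s)) :=
          lintegral_const_mul' _ _ ENNReal.ofReal_ne_top
      _ = ENNReal.ofReal ((w + r) ^ (-μ₀) * Vf w) := by
          rw [← ofReal_integral_eq_lintegral_ofReal (hV w hw)
            ((ae_restrict_iff' measurableSet_Ioi).mpr (ae_of_all _ (hinn _ w))),
            ← ENNReal.ofReal_mul (by positivity : (0:ℝ) ≤ (w + r) ^ (-μ₀))]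
  -- Step B: summing over j
  have hfin : ∀ x : ℝ, {n : ℕ | c n ≤ x}.Finite := by
    intro x
    obtain ⟨N, hN⟩ := (htend.eventually (eventually_gt_atTop x)).exists_forall_of_atTop
    refine (Set.finite_Iio N).subset ?_
    intro n hn
    by_contra h
    exact absurd hn (not_le.mpr (hN n (le_of_not_gt h)))
  have key2 : ∀ j, ∫⁻ x in Ioi (c j), G x = ∫⁻ x in Ioi (c 0), (Ioi (c j)).indicator G x := by
    intro j
    rw [lintegral_indicator measurableSet_Ioi, Measure.restrict_restrict measurableSet_Ioi,
      inter_eq_left.mpr (Ioi_subset_Ioi (hmono.monotone (Nat.zero_le j)))]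
  have hcount : ∀ᵐ x ∂(volume.restrict (Ioi (c 0))), x ∉ Set.range c := by
    refine ae_restrict_of_ae ?_
    have h0 : volume (Set.range c) = 0 := Set.Countable.measure_zero (countable_range c) _
    rw [← compl_mem_ae_iff] at h0
    exact h0
  have hsum_ind : ∀ᵐ x ∂(volume.restrict (Ioi (c 0))),
      ∑' j, (Ioi (c j)).indicator G x = (Nat.card {n : ℕ | c n ≤ x} : ℝ≥0∞) * G x := by
    filter_upwards [hcount] with x hx
    have hfx := hfin x
    have heq : ∀ j, (Ioi (c j)).indicator G x = if c j ≤ x then G x else 0 := by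
      intro j
      by_cases h : c j ≤ x
      · rw [if_pos h]
        exact indicator_of_mem (lt_of_le_of_ne h (fun he => hx ⟨j, he⟩)) G
      · rw [if_neg h]
        exact indicator_of_notMem (by simpa using fun hlt : c j < x => h hlt.le) G
    calc ∑' j, (Ioi (c j)).indicator G x = ∑' j, if c j ≤ x then G x else 0 := tsum_congr heq
      _ = ∑ j ∈ hfx.toFinset, if c j ≤ x then G x else 0 :=
          tsum_eq_sum (fun j hj => if_neg (by simpa [Set.Finite.mem_toFinset] using hj))
      _ = ∑ j ∈ hfx.toFinset, G x :=
          Finset.sum_congr rfl (fun j hj => if_pos (by simpa [Set.Finite.mem_toFinset] using hj))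
      _ = (hfx.toFinset.card : ℝ≥0∞) * G x := by rw [Finset.sum_const, nsmul_eq_mul]
      _ = (Nat.card {n : ℕ | c n ≤ x} : ℝ≥0∞) * G x := by
          congr 2
          rw [Nat.card_coe_set_eq, Set.ncard_eq_toFinset_card _ hfx]
  have hTnn : ∀ j, 0 ≤ (c j + r) ^ (-μ₀) * Vf (c j) :=
    fun j => mul_nonneg (Real.rpow_nonneg (by have := hcpos j; linarith) _) (hVnn _)
  have main : ENNReal.ofReal (∑' j : ℕ, (c j + r) ^ (-μ₀) * Vf (c j)) =
      ∫⁻ x in Ioi (c 0), (Nat.card {n : ℕ | c n ≤ x} : ℝ≥0∞) * G x := by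
    rw [ENNReal.ofReal_tsum_of_nonneg hTnn hsum]
    calc ∑' j : ℕ, ENNReal.ofReal ((c j + r) ^ (-μ₀) * Vf (c j))
        = ∑' j : ℕ, ∫⁻ x in Ioi (c j), G x := tsum_congr fun j => (stepA (c j) (hcpos j)).symm
      _ = ∑' j : ℕ, ∫⁻ x in Ioi (c 0), (Ioi (c j)).indicator G x := tsum_congr key2
      _ = ∫⁻ x in Ioi (c 0), ∑' j, (Ioi (c j)).indicator G x :=
          (lintegral_tsum fun j => (hGm.indicator measurableSet_Ioi).aemeasurable).symm
      _ = ∫⁻ x in Ioi (c 0), (Nat.card {n : ℕ | c n ≤ x} : ℝ≥0∞) * G x :=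
          lintegral_congr_ae hsum_ind
  -- Step C: split the integral into the two pieces
  have hnn1 : ∀ x ∈ Ioi (c 0), (0:ℝ) ≤
      (Nat.card {n : ℕ | c n ≤ x} : ℝ) * (x + r) ^ (-μ₀) * Wf x := by
    intro x hx
    have hxr : (0:ℝ) ≤ x + r := by have := mem_Ioi.mp hx; linarith
    exact mul_nonneg (mul_nonneg (Nat.cast_nonneg _) (Real.rpow_nonneg hxr _)) (hWnn x)
  have hnn2 : ∀ x ∈ Ioi (c 0), (0:ℝ) ≤
      (Nat.card {n : ℕ | c n ≤ x} : ℝ) * (x + r) ^ (-(μ₀ + 1)) * Vf x := by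
    intro x hx
    have hxr : (0:ℝ) ≤ x + r := by have := mem_Ioi.mp hx; linarith
    exact mul_nonneg (mul_nonneg (Nat.cast_nonneg _) (Real.rpow_nonneg hxr _)) (hVnn x)
  have split : ∫⁻ x in Ioi (c 0), (Nat.card {n : ℕ | c n ≤ x} : ℝ≥0∞) * G x =
      ENNReal.ofReal (∫ x in Ioi (c 0),
          (Nat.card {n : ℕ | c n ≤ x} : ℝ) * (x + r) ^ (-μ₀) * Wf x) +
      ENNReal.ofReal μ₀ * ENNReal.ofReal (∫ x in Ioi (c 0),
          (Nat.card {n : ℕ | c n ≤ x} : ℝ) * (x + r) ^ (-(μ₀ + 1)) * Vf x) := by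
    have hpt : ∀ x ∈ Ioi (c 0), (Nat.card {n : ℕ | c n ≤ x} : ℝ≥0∞) * G x =
        ENNReal.ofReal ((Nat.card {n : ℕ | c n ≤ x} : ℝ) * (x + r) ^ (-μ₀) * Wf x) +
        ENNReal.ofReal μ₀ *
          ENNReal.ofReal ((Nat.card {n : ℕ | c n ≤ x} : ℝ) * (x + r) ^ (-(μ₀ + 1)) * Vf x) := by
      intro x hx
      rw [hGdef]
      simp only
      rw [mul_add, ← ENNReal.ofReal_natCast (Nat.card {n : ℕ | c n ≤ x}),
        ← ENNReal.ofReal_mul (Nat.cast_nonneg _), ← ENNReal.ofReal_mul (Nat.cast_nonneg _),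
        ← ENNReal.ofReal_mul hμ₀.le]
      congr 1
      · congr 1; ring
      · congr 1; ring
    rw [setLIntegral_congr_fun_ae measurableSet_Ioi (ae_of_all _ hpt),
      lintegral_add_left' (hout1.aestronglyMeasurable.aemeasurable.ennreal_ofReal),
      lintegral_const_mul' _ _ ENNReal.ofReal_ne_top,
      ← ofReal_integral_eq_lintegral_ofReal hout1
        ((ae_restrict_iff' measurableSet_Ioi).mpr (ae_of_all _ hnn1)),
      ← ofReal_integral_eq_lintegral_ofReal hout2
        ((ae_restrict_iff' measurableSet_Ioi).mpr (ae_of_all _ hnn2))]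
  have I1nn : 0 ≤ ∫ x in Ioi (c 0),
      (Nat.card {n : ℕ | c n ≤ x} : ℝ) * (x + r) ^ (-μ₀) * Wf x :=
    setIntegral_nonneg measurableSet_Ioi hnn1
  have I2nn : 0 ≤ ∫ x in Ioi (c 0),
      (Nat.card {n : ℕ | c n ≤ x} : ℝ) * (x + r) ^ (-(μ₀ + 1)) * Vf x :=
    setIntegral_nonneg measurableSet_Ioi hnn2
  refine (ENNReal.ofReal_eq_ofReal_iff (tsum_nonneg hTnn)
    (add_nonneg I1nn (mul_nonneg hμ₀.le I2nn))).mp ?_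
  rw [ENNReal.ofReal_add I1nn (mul_nonneg hμ₀.le I2nn), ENNReal.ofReal_mul hμ₀.le]
  exact main.trans split
end
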